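/- Let X ∈ VPM°(n) and let V be an n×n real symmetric matrix, and set A = X^{−1/2} V X^{−1/2} and B = (I−X)^{−1/2} V (I−X)^{−1/2}. Then the Hilbert–Finsler norm is bounded above by √2 times the log-barrier norm: max( max(0, −λmin(A)), max(0, λmax(B)) ) + max( max(0, λmax(A)), max(0, −λmin(B)) ) ≤ √2 · sqrt( ‖A‖_F² + ‖B‖_F² ). -/

import Mathlib

open Matrix

/-- The open variance-precision bicone VPM°(n): symmetric matrices `X` with
`X` and `I - X` positive definite. -/
def VPM (n : ℕ) : Set (Matrix (Fin n) (Fin n) ℝ) :=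
  {X | X.PosDef ∧ (1 - X).PosDef}

/-- Largest (real) eigenvalue of a matrix, as the supremum of its real spectrum. -/
noncomputable def lmax {n : ℕ} (S : Matrix (Fin n) (Fin n) ℝ) : ℝ := sSup (spectrum ℝ S)

/-- Smallest (real) eigenvalue of a matrix, as the infimum of its real spectrum. -/
noncomputable def lmin {n : ℕ} (S : Matrix (Fin n) (Fin n) ℝ) : ℝ := sInf (spectrum ℝ S)

/-- Frobenius norm of a real matrix. -/
noncomputable def frobNorm {n : ℕ} (S : Matrix (Fin n) (Fin n) ℝ) : ℝ :=
  Real.sqrt (Matrix.trace (Sᵀ * S))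

/-- The square root of a positive semidefinite matrix, as defined in the older Mathlib
(removed since): `U * diagonal (√ eigenvalues) * U⋆`. -/
noncomputable def Matrix.PosSemidef.sqrt {n 𝕜 : Type*} [Fintype n] [RCLike 𝕜] [DecidableEq n]
    [PartialOrder 𝕜] [StarOrderedRing 𝕜]
    {A : Matrix n n 𝕜} (hA : A.PosSemidef) : Matrix n n 𝕜 :=
  hA.1.eigenvectorUnitary.1 * diagonal ((↑) ∘ Real.sqrt ∘ hA.1.eigenvalues) *
  (star hA.1.eigenvectorUnitary : Matrix n n 𝕜)

section Aux

variable {n : ℕ}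

lemma sqrt_isHermitian_aux {M : Matrix (Fin n) (Fin n) ℝ} (hM : M.PosSemidef) :
    hM.sqrt.IsHermitian := by
  unfold Matrix.PosSemidef.sqrt
  rw [star_eq_conjTranspose]
  exact isHermitian_mul_mul_conjTranspose _ (isHermitian_diagonal _)

lemma spectrum_eq_range_aux {S : Matrix (Fin n) (Fin n) ℝ} (hS : S.IsHermitian) :
    spectrum ℝ S = Set.range hS.eigenvalues := by
  conv_lhs => rw [hS.spectral_theorem]
  rw [show (RCLike.ofReal ∘ hS.eigenvalues : Fin n → ℝ) = hS.eigenvalues by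
    ext i; simp]
  have := spectrum.units_conjugate (R := ℝ)
    (u := Unitary.toUnits hS.eigenvectorUnitary) (a := diagonal hS.eigenvalues)
  rw [← spectrum_diagonal (R := ℝ) hS.eigenvalues]
  exact this

lemma trace_sq_eq_aux {S : Matrix (Fin n) (Fin n) ℝ} (hS : S.IsHermitian) :
    Matrix.trace (Sᵀ * S) = ∑ i, hS.eigenvalues i ^ 2 := by
  have hT : Sᵀ = S := by
    have := hS.eq
    rw [conjTranspose] at this
    exact (conjTranspose_eq_transpose_of_trivial S).symm.trans hS.eq
  rw [hT]
  conv_lhs => rw [hS.spectral_theorem, Unitary.conjStarAlgAut_apply]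
  have hu : (star (hS.eigenvectorUnitary : Matrix (Fin n) (Fin n) ℝ)) *
      (hS.eigenvectorUnitary : Matrix (Fin n) (Fin n) ℝ) = 1 :=
    Unitary.coe_star_mul_self _
  rw [show (RCLike.ofReal ∘ hS.eigenvalues : Fin n → ℝ) = hS.eigenvalues by ext i; simp]
  set U := (hS.eigenvectorUnitary : Matrix (Fin n) (Fin n) ℝ)
  set D := diagonal hS.eigenvalues
  have : U * D * star U * (U * D * star U) = U * (D * D) * star U := by
    simp only [mul_assoc]
    rw [← mul_assoc (star U) U, hu, one_mul]
  rw [this, trace_mul_cycle, ← mul_assoc, hu, one_mul, diagonal_mul_diagonal, trace_diagonal]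
  simp [sq]

lemma key_ineq_aux {S : Matrix (Fin n) (Fin n) ℝ} (hS : S.IsHermitian) :
    (max 0 (-lmin S))^2 + (max 0 (lmax S))^2 ≤ Matrix.trace (Sᵀ * S) := by
  rw [trace_sq_eq_aux hS]
  rcases Nat.eq_zero_or_pos n with h | h
  · subst h
    have : spectrum ℝ S = ∅ := by
      rw [spectrum_eq_range_aux hS]
      simp [Set.range_eq_empty]
    simp [lmin, lmax, this, Real.sSup_empty, Real.sInf_empty]
  · haveI : Nonempty (Fin n) := ⟨⟨0, h⟩⟩
    have hfin : (spectrum ℝ S).Finite := by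
      rw [spectrum_eq_range_aux hS]; exact Set.finite_range _
    have hne : (spectrum ℝ S).Nonempty := by
      rw [spectrum_eq_range_aux hS]; exact Set.range_nonempty _
    have hmax : lmax S ∈ spectrum ℝ S := hne.csSup_mem hfin
    have hmin : lmin S ∈ spectrum ℝ S := hne.csInf_mem hfin
    have hle : lmin S ≤ lmax S := csInf_le_csSup hne hfin.bddBelow hfin.bddAbove
    rw [spectrum_eq_range_aux hS] at hmax hmin
    obtain ⟨i, hi⟩ := hmax
    obtain ⟨j, hj⟩ := hmin
    have hsingle : ∀ k : Fin n, hS.eigenvalues k ^ 2 ≤ ∑ l, hS.eigenvalues l ^ 2 :=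
      fun k => Finset.single_le_sum (f := fun l => hS.eigenvalues l ^ 2)
        (fun l _ => sq_nonneg _) (Finset.mem_univ k)
    rcases le_or_gt 0 (lmin S) with hm | hm
    · rw [max_eq_left (by linarith)]
      rw [max_eq_right (by linarith)]
      calc 0 ^ 2 + lmax S ^ 2 = hS.eigenvalues i ^ 2 := by rw [hi]; ring
        _ ≤ _ := hsingle i
    · rcases le_or_gt (lmax S) 0 with hM | hM
      · rw [max_eq_left hM, max_eq_right (by linarith)]
        calc (-lmin S) ^ 2 + 0 ^ 2 = hS.eigenvalues j ^ 2 := by rw [hj]; ring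
          _ ≤ _ := hsingle j
      · rw [max_eq_right (by linarith), max_eq_right (by linarith)]
        have hij : j ≠ i := by
          intro hij; rw [hij, hi] at hj; linarith
        calc (-lmin S) ^ 2 + lmax S ^ 2
            = hS.eigenvalues j ^ 2 + hS.eigenvalues i ^ 2 := by rw [hi, hj]; ring
          _ = ∑ k ∈ ({j, i} : Finset (Fin n)), hS.eigenvalues k ^ 2 := by
              rw [Finset.sum_pair hij]
          _ ≤ ∑ k, hS.eigenvalues k ^ 2 :=
              Finset.sum_le_sum_of_subset_of_nonneg (Finset.subset_univ _)
                (fun k _ _ => sq_nonneg _)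

lemma trace_nonneg_aux {S : Matrix (Fin n) (Fin n) ℝ} (hS : S.IsHermitian) :
    0 ≤ Matrix.trace (Sᵀ * S) := by
  rw [trace_sq_eq_aux hS]
  exact Finset.sum_nonneg fun l _ => sq_nonneg _

lemma sq_neg_lmin_le_aux {S : Matrix (Fin n) (Fin n) ℝ} (hS : S.IsHermitian) :
    (max 0 (-lmin S))^2 ≤ Matrix.trace (Sᵀ * S) := by
  have := key_ineq_aux hS
  nlinarith [sq_nonneg (max 0 (lmax S))]

lemma sq_lmax_le_aux {S : Matrix (Fin n) (Fin n) ℝ} (hS : S.IsHermitian) :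
    (max 0 (lmax S))^2 ≤ Matrix.trace (Sᵀ * S) := by
  have := key_ineq_aux hS
  nlinarith [sq_nonneg (max 0 (-lmin S))]

end Aux

/-- The Hilbert–Finsler norm is bounded above by `√2` times the log-barrier norm:
`‖V‖^H_X ≤ √2 · ‖V‖^Ψ_X`. -/
theorem finsler_norm_le_sqrt_two_barrier_norm {n : ℕ}
    (X V : Matrix (Fin n) (Fin n) ℝ) (hX : X ∈ VPM n) (hV : V.IsHermitian)
    (A B : Matrix (Fin n) (Fin n) ℝ)
    (hA : A = hX.1.posSemidef.sqrt⁻¹ * V * hX.1.posSemidef.sqrt⁻¹)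
    (hB : B = hX.2.posSemidef.sqrt⁻¹ * V * hX.2.posSemidef.sqrt⁻¹) :
    max (max 0 (-lmin A)) (max 0 (lmax B)) + max (max 0 (lmax A)) (max 0 (-lmin B))
      ≤ Real.sqrt 2 * Real.sqrt (frobNorm A ^ 2 + frobNorm B ^ 2) := by
  -- Hermitian-ness of A and B
  have hMA : (hX.1.posSemidef.sqrt⁻¹).IsHermitian :=
    (sqrt_isHermitian_aux hX.1.posSemidef).inv
  have hMB : (hX.2.posSemidef.sqrt⁻¹).IsHermitian :=
    (sqrt_isHermitian_aux hX.2.posSemidef).inv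
  have hAH : A.IsHermitian := by
    rw [hA]
    have := isHermitian_mul_mul_conjTranspose (hX.1.posSemidef.sqrt⁻¹) hV
    rwa [hMA.eq] at this
  have hBH : B.IsHermitian := by
    rw [hB]
    have := isHermitian_mul_mul_conjTranspose (hX.2.posSemidef.sqrt⁻¹) hV
    rwa [hMB.eq] at this
  clear hA hB
  -- abbreviations
  set u1 := max 0 (-lmin A) with hu1
  set u2 := max 0 (lmax B) with hu2
  set v1 := max 0 (lmax A) with hv1
  set v2 := max 0 (-lmin B) with hv2
  set a := max u1 u2 with ha
  set b := max v1 v2 with hb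
  set TA := Matrix.trace (Aᵀ * A) with hTA
  set TB := Matrix.trace (Bᵀ * B) with hTB
  have hTAnn : 0 ≤ TA := trace_nonneg_aux hAH
  have hTBnn : 0 ≤ TB := trace_nonneg_aux hBH
  have hFA : frobNorm A ^ 2 = TA := Real.sq_sqrt hTAnn
  have hFB : frobNorm B ^ 2 = TB := Real.sq_sqrt hTBnn
  have ha0 : 0 ≤ a := le_trans (le_max_left 0 _) (le_max_left _ _)
  have hb0 : 0 ≤ b := le_trans (le_max_left 0 _) (le_max_left _ _)
  -- a^2 + b^2 ≤ TA + TB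
  have hsq : a ^ 2 + b ^ 2 ≤ TA + TB := by
    have hu1sq : u1 ^ 2 ≤ TA := sq_neg_lmin_le_aux hAH
    have hu2sq : u2 ^ 2 ≤ TB := sq_lmax_le_aux hBH
    have hv1sq : v1 ^ 2 ≤ TA := sq_lmax_le_aux hAH
    have hv2sq : v2 ^ 2 ≤ TB := sq_neg_lmin_le_aux hBH
    have hkeyA : u1 ^ 2 + v1 ^ 2 ≤ TA := key_ineq_aux hAH
    have hkeyB : u2 ^ 2 + v2 ^ 2 ≤ TB := by
      have := key_ineq_aux hBH
      linarith [this]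
    rcases max_choice u1 u2 with h1 | h1 <;> rcases max_choice v1 v2 with h2 | h2 <;>
      rw [← ha, ← hb] at * <;> rw [h1, h2] <;> linarith
  -- now combine
  have step1 : a + b ≤ Real.sqrt 2 * Real.sqrt (a ^ 2 + b ^ 2) := by
    rw [← Real.sqrt_mul (by norm_num : (0:ℝ) ≤ 2)]
    have h1 : a + b = Real.sqrt ((a + b) ^ 2) := (Real.sqrt_sq (by linarith)).symm
    rw [h1]
    apply Real.sqrt_le_sqrt
    nlinarith [sq_nonneg (a - b)]
  have step2 : Real.sqrt (a ^ 2 + b ^ 2) ≤ Real.sqrt (frobNorm A ^ 2 + frobNorm B ^ 2) := by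
    apply Real.sqrt_le_sqrt
    rw [hFA, hFB]
    exact hsq
  calc a + b ≤ Real.sqrt 2 * Real.sqrt (a ^ 2 + b ^ 2) := step1
    _ ≤ Real.sqrt 2 * Real.sqrt (frobNorm A ^ 2 + frobNorm B ^ 2) :=
        mul_le_mul_of_nonneg_left step2 (Real.sqrt_nonneg 2)
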